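/- For every n ≥ 1, every unit of Dₙ whose image in D₁ = ℚ[s]/(Δ_s) under the reduction map equals 1 lies in the image of φₙ : Eₙ^× → Dₙ^×. -/

import Mathlib

open LaurentPolynomial

set_option maxHeartbeats 1000000
set_option synthInstance.maxHeartbeats 400000

noncomputable section

/-- `Λ = ℚ[t,t⁻¹]`, the ring of Laurent polynomials over `ℚ`. -/
abbrev Λ : Type := LaurentPolynomial ℚ

/-- The variable `t` of `Λ`. -/
def tΛ : Λ := T 1

/-- The involution `P(t) ↦ P(t⁻¹)` of `Λ`. -/
def lbar : Λ →+* Λ := (invert : Λ ≃ₐ[ℚ] Λ).toRingEquiv.toRingHom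

/-- `P ∈ Λ` is symmetric if `P(t⁻¹) = P(t)`. -/
def SymmL (P : Λ) : Prop := lbar P = P

/-- The fraction field `ℚ(t)` of `Λ`. -/
abbrev KΛ : Type := FractionRing Λ

/-- The involution of `ℚ(t)` extending that of `Λ`. -/
def kbar : KΛ →+* KΛ :=
  (IsFractionRing.ringEquivOfRingEquiv (A := Λ) (B := Λ) (K := KΛ) (L := KΛ)
    (invert : Λ ≃ₐ[ℚ] Λ).toRingEquiv).toRingHom

lemma kbar_algebraMap (P : Λ) : kbar (algebraMap Λ KΛ P) = algebraMap Λ KΛ (lbar P) := by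
  simp [kbar, lbar]

/-- The image of `Λ` inside `ℚ(t)`, as a `Λ`-submodule of `ℚ(t)`. -/
def ΛinK : Submodule Λ KΛ := LinearMap.range (Algebra.linearMap Λ KΛ)

/-- The quotient `Λ`-module `ℚ(t)/Λ`. -/
abbrev QL : Type := KΛ ⧸ ΛinK

/-- The class in `ℚ(t)/Λ` of an element of `ℚ(t)`. -/
abbrev QLmk : KΛ →ₗ[Λ] QL := ΛinK.mkQ

/-- The class of the fraction `P/Q` in `ℚ(t)/Λ`, for `P Q : Λ`. -/
def fracQ (P Q : Λ) : QL := QLmk (algebraMap Λ KΛ P / algebraMap Λ KΛ Q)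

/-- The involution of `ℚ(t)/Λ` induced by `P(t) ↦ P(t⁻¹)`. -/
def qbar : QL → QL := fun x =>
  Quotient.liftOn x (fun a => QLmk (kbar a)) (by
    intro a b h
    obtain ⟨r, hr⟩ := (Submodule.quotientRel_def (p := ΛinK)).mp h
    apply (Submodule.Quotient.eq _).2
    refine ⟨lbar r, ?_⟩
    rw [← map_sub, ← hr]
    exact (kbar_algebraMap _).symm)

lemma qbar_mk (a : KΛ) : qbar (QLmk a) = QLmk (kbar a) := rfl

/-- Evaluation of a Laurent polynomial at a nonzero rational number. -/
def evalL (q : ℚˣ) : Λ →ₐ[ℚ] ℚ :=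
  AddMonoidAlgebra.lift ℚ ℚ ℤ ((Units.coeHom ℚ).comp (zpowersHom ℚˣ q))

/-- A hermitian form on a `Λ`-module `A`, with values in `ℚ(t)/Λ`:
it is `Λ`-linear in the first variable and conjugate-symmetric (hence
semilinear with respect to the involution in the second variable). -/
structure HermForm (A : Type*) [AddCommGroup A] [Module Λ A] where
  bil : A → A → QL
  add_left : ∀ x y z : A, bil (x + y) z = bil x z + bil y z
  smul_left : ∀ (r : Λ) (x y : A), bil (r • x) y = r • bil x y
  conj_symm : ∀ x y : A, bil x y = qbar (bil y x)

/-- A hermitian form is non-degenerate if `φ(x,y) = 0` for all `y` implies `x = 0`. -/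
def HermForm.Nondeg {A : Type*} [AddCommGroup A] [Module Λ A] (φ : HermForm A) : Prop :=
  ∀ x : A, (∀ y : A, φ.bil x y = 0) → x = 0

/-- Two hermitian forms are isometric if they differ by a `Λ`-module automorphism. -/
def HermForm.Isometric {A : Type*} [AddCommGroup A] [Module Λ A]
    (φ₁ φ₂ : HermForm A) : Prop :=
  ∃ f : A ≃ₗ[Λ] A, ∀ x y : A, φ₂.bil x y = φ₁.bil (f x) (f y)

/-- The `ℚ`-algebra map `ℚ[s] → Λ` sending `s` to `t + t⁻¹`. -/
def θQ : Polynomial ℚ →ₐ[ℚ] Λ := Polynomial.aeval (T 1 + T (-1))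

/-- `Eₙ = Λ/(Δⁿ)`. -/
abbrev En (Δ : Λ) (n : ℕ) : Type := Λ ⧸ (Ideal.span {Δ ^ n} : Ideal Λ)

/-- `Dₙ = ℚ[s]/(Δ_sⁿ)`. -/
abbrev Dn (Δs : Polynomial ℚ) (n : ℕ) : Type :=
  Polynomial ℚ ⧸ (Ideal.span {Δs ^ n} : Ideal (Polynomial ℚ))

/-- The ring homomorphism `Dₙ → Eₙ` induced by `s ↦ t + t⁻¹`. -/
def ιDE (Δ : Λ) (Δs : Polynomial ℚ) (hθ : θQ Δs = Δ) (n : ℕ) : Dn Δs n →+* En Δ n :=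
  Ideal.quotientMap (Ideal.span {Δ ^ n}) θQ.toRingHom (by
    rw [Ideal.span_le, Set.singleton_subset_iff, SetLike.mem_coe, Ideal.mem_comap]
    have : θQ.toRingHom (Δs ^ n) = Δ ^ n := by rw [map_pow]; exact congrArg (· ^ n) hθ
    rw [this]
    exact Ideal.subset_span rfl)

/-- The involution of `Eₙ` induced by that of `Λ` (using that `Δ` is symmetric). -/
def barE (Δ : Λ) (hsym : lbar Δ = Δ) (n : ℕ) : En Δ n →+* En Δ n :=
  Ideal.quotientMap (Ideal.span {Δ ^ n}) lbar (by
    rw [Ideal.span_le, Set.singleton_subset_iff, SetLike.mem_coe, Ideal.mem_comap]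
    have : lbar (Δ ^ n) = Δ ^ n := by rw [map_pow, hsym]
    rw [this]
    exact Ideal.subset_span rfl)

/-- The image of `φₙ : Eₙˣ → Dₙˣ`, i.e. the subgroup of `Dₙˣ` of elements `d` such
that the image of `d` in `Eₙ` is of the form `R·R̄` for a unit `R` of `Eₙ`. -/
def normSub (Δ : Λ) (Δs : Polynomial ℚ) (hθ : θQ Δs = Δ) (hsym : lbar Δ = Δ) (n : ℕ) :
    Subgroup (Dn Δs n)ˣ where
  carrier := {d : (Dn Δs n)ˣ | ∃ R : (En Δ n)ˣ,
    ιDE Δ Δs hθ n (d : Dn Δs n) = (R : En Δ n) * barE Δ hsym n (R : En Δ n)}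
  one_mem' := ⟨1, by simp⟩
  mul_mem' := by
    rintro a b ⟨R, hR⟩ ⟨S, hS⟩
    refine ⟨R * S, ?_⟩
    rw [Units.val_mul, map_mul, hR, hS, Units.val_mul, map_mul]
    ring
  inv_mem' := by
    rintro a ⟨R, hR⟩
    refine ⟨R⁻¹, ?_⟩
    have hxu : ιDE Δ Δs hθ n ((a⁻¹ : (Dn Δs n)ˣ) : Dn Δs n)
        * ((R : En Δ n) * barE Δ hsym n (R : En Δ n)) = 1 := by
      rw [← hR, ← map_mul, ← Units.val_mul, inv_mul_cancel, Units.val_one, map_one]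
    have h1 : ((R⁻¹ : (En Δ n)ˣ) : En Δ n) * (R : En Δ n) = 1 := by
      rw [← Units.val_mul, inv_mul_cancel, Units.val_one]
    have hyu : (((R⁻¹ : (En Δ n)ˣ) : En Δ n) * barE Δ hsym n ((R⁻¹ : (En Δ n)ˣ) : En Δ n))
        * ((R : En Δ n) * barE Δ hsym n (R : En Δ n)) = 1 := by
      calc (((R⁻¹ : (En Δ n)ˣ) : En Δ n) * barE Δ hsym n ((R⁻¹ : (En Δ n)ˣ) : En Δ n))
            * ((R : En Δ n) * barE Δ hsym n (R : En Δ n))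
          = (((R⁻¹ : (En Δ n)ˣ) : En Δ n) * (R : En Δ n))
            * (barE Δ hsym n ((R⁻¹ : (En Δ n)ˣ) : En Δ n) * barE Δ hsym n (R : En Δ n)) := by
            ring
        _ = 1 := by rw [h1, ← map_mul, h1, map_one, one_mul]
    calc ιDE Δ Δs hθ n ((a⁻¹ : (Dn Δs n)ˣ) : Dn Δs n)
        = ιDE Δ Δs hθ n ((a⁻¹ : (Dn Δs n)ˣ) : Dn Δs n)
          * (((R : En Δ n) * barE Δ hsym n (R : En Δ n))
          * (((R⁻¹ : (En Δ n)ˣ) : En Δ n) * barE Δ hsym n ((R⁻¹ : (En Δ n)ˣ) : En Δ n))) := by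
          rw [show ((R : En Δ n) * barE Δ hsym n (R : En Δ n))
            * (((R⁻¹ : (En Δ n)ˣ) : En Δ n) * barE Δ hsym n ((R⁻¹ : (En Δ n)ˣ) : En Δ n)) = 1 by
              rw [mul_comm]; exact hyu]
          rw [mul_one]
      _ = (ιDE Δ Δs hθ n ((a⁻¹ : (Dn Δs n)ˣ) : Dn Δs n)
          * ((R : En Δ n) * barE Δ hsym n (R : En Δ n)))
          * (((R⁻¹ : (En Δ n)ˣ) : En Δ n) * barE Δ hsym n ((R⁻¹ : (En Δ n)ˣ) : En Δ n)) := by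
          ring
      _ = ((R⁻¹ : (En Δ n)ˣ) : En Δ n) * barE Δ hsym n ((R⁻¹ : (En Δ n)ˣ) : En Δ n) := by
          rw [hxu, one_mul]

instance normSub_normal (Δ : Λ) (Δs : Polynomial ℚ) (hθ : θQ Δs = Δ) (hsym : lbar Δ = Δ)
    (n : ℕ) : (normSub Δ Δs hθ hsym n).Normal :=
  haveI : IsMulCommutative (Dn Δs n)ˣ := ⟨⟨fun a b => Units.ext (by rw [Units.val_mul, Units.val_mul]; exact mul_comm _ _)⟩⟩
  Subgroup.normal_of_isMulCommutative (G := (Dn Δs n)ˣ) _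

/-- The reduction map `Dₙ → D₁`. -/
def redD (Δs : Polynomial ℚ) (n : ℕ) (hn : 1 ≤ n) : Dn Δs n →+* Dn Δs 1 :=
  Ideal.Quotient.factor (by
    rw [Ideal.span_le, Set.singleton_subset_iff, SetLike.mem_coe, Ideal.mem_span_singleton,
      pow_one]
    exact dvd_pow_self Δs (by omega))

/-! Since `2` is invertible and `d - 1` is nilpotent, Newton's method for `X² - d` started at `1`
produces a square root `r` of `d` in `Dₙ`. Elements of `Dₙ` are fixed by the involution of `Eₙ`,
so `d = r² = φₙ(r)`. -/

open Polynomial in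
lemma exists_sq_eq_of_isNilpotent_sub_one {R : Type*} [CommRing R] (h2 : IsUnit (2 : R))
    {u : R} (hu : IsNilpotent (u - 1)) : ∃ r : R, r ^ 2 = u := by
  have hP : IsNilpotent (aeval (1 : R) (X ^ 2 - Polynomial.C u)) := by
    simpa only [map_sub, map_pow, aeval_X, aeval_C, Algebra.algebraMap_self, RingHom.id_apply,
      one_pow, ← neg_sub u 1, isNilpotent_neg_iff] using hu
  have hP' : IsUnit (aeval (1 : R) (derivative (X ^ 2 - Polynomial.C u))) := by
    simpa only [derivative_sub, derivative_X_sq, derivative_C, sub_zero, map_mul, aeval_C,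
      aeval_X, Algebra.algebraMap_self, RingHom.id_apply, mul_one] using h2
  obtain ⟨r, -, hr⟩ := (existsUnique_nilpotent_sub_and_aeval_eq_zero hP hP').exists
  refine ⟨r, ?_⟩
  simpa only [map_sub, map_pow, aeval_X, aeval_C, Algebra.algebraMap_self, RingHom.id_apply,
    sub_eq_zero] using hr

lemma Ideal.Quotient.isNilpotent_of_factor_eq_zero {R : Type*} [CommRing R] {I J : Ideal R}
    (hIJ : I ≤ J) {n : ℕ} (hJI : J ^ n ≤ I) {y : R ⧸ I} (hy : Ideal.Quotient.factor hIJ y = 0) :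
    IsNilpotent y := by
  obtain ⟨p, rfl⟩ := Ideal.Quotient.mk_surjective y
  rw [Ideal.Quotient.factor_mk, Ideal.Quotient.eq_zero_iff_mem] at hy
  exact ⟨n, by rw [← map_pow, Ideal.Quotient.eq_zero_iff_mem]; exact hJI (Ideal.pow_mem_pow hy n)⟩

lemma isNilpotent_sub_one_of_redD_eq_one (Δs : Polynomial ℚ) (n : ℕ) (hn : 1 ≤ n)
    {d : Dn Δs n} (hd : redD Δs n hn d = 1) : IsNilpotent (d - 1) :=
  Ideal.Quotient.isNilpotent_of_factor_eq_zero (J := Ideal.span {Δs ^ 1}) _ (n := n)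
    (by rw [Ideal.span_singleton_pow, pow_one])
    (by rw [map_sub, map_one, sub_eq_zero]; exact hd)

lemma lbar_θQ (p : Polynomial ℚ) : lbar (θQ p) = θQ p := by
  have h : (invert : Λ ≃ₐ[ℚ] Λ).toAlgHom.comp θQ = θQ := by
    apply Polynomial.algHom_ext
    simp [θQ, add_comm]
  exact DFunLike.congr_fun h p

lemma barE_ιDE (Δ : Λ) (Δs : Polynomial ℚ) (hθ : θQ Δs = Δ) (hsym : lbar Δ = Δ) (n : ℕ)
    (x : Dn Δs n) : barE Δ hsym n (ιDE Δ Δs hθ n x) = ιDE Δ Δs hθ n x := by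
  obtain ⟨p, rfl⟩ := Ideal.Quotient.mk_surjective x
  exact congrArg (Ideal.Quotient.mk _) (lbar_θQ p)

lemma sq_mem_normSub (Δ : Λ) (Δs : Polynomial ℚ) (hθ : θQ Δs = Δ) (hsym : lbar Δ = Δ) (n : ℕ)
    (u : (Dn Δs n)ˣ) : u ^ 2 ∈ normSub Δ Δs hθ hsym n := by
  refine ⟨Units.map (ιDE Δ Δs hθ n).toMonoidHom u, ?_⟩
  change ιDE Δ Δs hθ n ((u : Dn Δs n) ^ 2) =
    ιDE Δ Δs hθ n u * barE Δ hsym n (ιDE Δ Δs hθ n u)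
  rw [barE_ιDE, map_pow, sq]

theorem stmt_13_general (Δ : Λ) (Δs : Polynomial ℚ)
    (hsym : lbar Δ = Δ) (hθ : θQ Δs = Δ) (n : ℕ) (hn : 1 ≤ n) :
    ∀ d : (Dn Δs n)ˣ,
      redD Δs n hn (d : Dn Δs n) = 1 → d ∈ normSub Δ Δs hθ hsym n := by
  intro d hd
  have h2 : IsUnit (2 : Dn Δs n) := by
    simpa only [map_ofNat] using (isUnit_of_invertible (2 : ℚ)).map (algebraMap ℚ (Dn Δs n))
  obtain ⟨r, hr⟩ :=
    exists_sq_eq_of_isNilpotent_sub_one h2 (isNilpotent_sub_one_of_redD_eq_one Δs n hn hd)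
  obtain ⟨u, rfl⟩ : IsUnit r := (isUnit_pow_iff two_ne_zero).mp (hr ▸ d.isUnit)
  obtain rfl : u ^ 2 = d := Units.ext (by rw [Units.val_pow_eq_pow_val, hr])
  exact sq_mem_normSub Δ Δs hθ hsym n u

/-- units of `Dₙ` reducing to `1` in `D₁` are norms. -/
theorem stmt_13 (Δ : Λ) (Δs : Polynomial ℚ)
    (hΔ : (Irreducible Δ ∧ SymmL Δ) ∨ Δ = tΛ + 2 + T (-1))
    (hsym : lbar Δ = Δ) (hθ : θQ Δs = Δ) (n : ℕ) (hn : 1 ≤ n) :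
    ∀ d : (Dn Δs n)ˣ,
      redD Δs n hn (d : Dn Δs n) = 1 → d ∈ normSub Δ Δs hθ hsym n :=
  stmt_13_general Δ Δs hsym hθ n hn
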